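/- The constraints consensus algorithm on a jointly strongly connected time-dependent digraph solves the distributed abstract program: in finite time, the candidate basis B^i at each node i satisfies φ(B^i) = φ(H), i.e., it is a solution of (H, φ). Moreover, if (H, φ) has a unique minimal basis B_H, then each node's final candidate basis equals B_H. -/

import Mathlib

/-!
The values `φ (B t i)` never decrease and lie in the finite set `φ '' 𝒫 H`, so they stabilize, and
joint strong connectivity makes the stable values equal at all nodes. From then on, locality
(applied inside the pool of node `i`) shows that a constraint not violating `B t j` does not violate
`B (t+1) i` when `j = i` or `j` is an in-neighbour of `i`. So the sets of constraints satisfied at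
each node only grow; once they stabilize, connectivity carries `h k`, which is satisfied at node `k`
itself, to every node. Finally, a basis violated by no constraint of `H` has value `φ H`, by
adding the constraints one at a time and using locality at each step.
-/
/-- `B` is a basis of `G`: a minimal subset of `G` with finite value equal to `φ(G)`. -/
def IsBasisOf {α : Type*} [DecidableEq α] {Φ : Type*} [LinearOrder Φ] [OrderBot Φ]
    (φ : Finset α → Φ) (B G : Finset α) : Prop :=
  B ⊆ G ∧ ⊥ < φ B ∧ φ B = φ G ∧ ∀ B' ⊂ B, φ B' < φ B

open Finset

theorem exists_forall_ge_eq_of_le_succ {γ : Type*} [PartialOrder γ] {f : ℕ → γ} {T₀ : ℕ}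
    (hf : ∀ t ≥ T₀, f t ≤ f (t + 1)) (hfin : (Set.range f).Finite) :
    ∃ T ≥ T₀, ∀ t ≥ T, f t = f T := by
  have hmono : Monotone fun s => f (T₀ + s) := monotone_nat_of_le_succ fun s => hf _ (by omega)
  obtain ⟨_, ⟨s, rfl⟩, hmax⟩ := (hfin.subset (Set.range_comp_subset_range _ f)).exists_maximalFor
    id _ (Set.range_nonempty fun s => f (T₀ + s))
  refine ⟨T₀ + s, by omega, fun t ht => ?_⟩
  obtain ⟨r, rfl⟩ := Nat.exists_eq_add_of_le ht
  have hle : f (T₀ + s) ≤ f (T₀ + (s + r)) := hmono (Nat.le_add_right s r)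
  rw [← add_assoc] at hle
  exact le_antisymm (hmax ⟨s + r, by simp only [Function.comp, add_assoc]⟩ hle) hle

theorem Relation.ReflTransGen.le_of_rel_imp_le {β γ : Type*} [Preorder γ] {r : β → β → Prop}
    {g : β → γ} {a b : β} (hg : ∀ a b, r a b → g a ≤ g b) (hab : Relation.ReflTransGen r a b) :
    g a ≤ g b := by
  simpa only [Relation.reflTransGen_eq_self] using hab.lift g hg

section AbstractProgram

variable {α Φ : Type*} [DecidableEq α] [LinearOrder Φ] [OrderBot Φ]

def Violates (φ : Finset α → Φ) (G : Finset α) (a : α) : Prop :=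
  φ G < φ (insert a G)

/-- The locality axiom of an abstract optimization program. -/
def IsLocal (φ : Finset α → Φ) : Prop :=
  ∀ F G : Finset α, F ⊆ G → ⊥ < φ F → φ F = φ G → ∀ a, Violates φ G a → Violates φ F a

variable {φ : Finset α → Φ} {F G S : Finset α} {a : α}

theorem phi_union_eq_of_not_violates (hmono : Monotone φ) (hloc : IsLocal φ)
    (hG : ⊥ < φ G) (hS : ∀ a ∈ S, ¬ Violates φ G a) : φ (G ∪ S) = φ G := by
  induction S using Finset.induction_on with
  | empty => rw [union_empty]
  | insert a S _ ih =>
    have hS' : φ (G ∪ S) = φ G := ih fun b hb => hS b (mem_insert_of_mem hb)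
    have ha : ¬ Violates φ (G ∪ S) a :=
      mt (hloc G (G ∪ S) subset_union_left hG hS'.symm a) (hS a (mem_insert_self a S))
    rw [union_insert]
    exact le_antisymm ((not_lt.mp ha).trans_eq hS') (hmono (subset_union_left.trans
      (subset_insert a _)))

theorem IsBasisOf.not_violates_of_mem (hmono : Monotone φ) {B : Finset α}
    (hB : IsBasisOf φ B G) (ha : a ∈ G) : ¬ Violates φ B a :=
  not_lt.mpr ((hmono (insert_subset ha hB.1)).trans_eq hB.2.2.1.symm)

theorem IsBasisOf.not_violates_of_subset (hmono : Monotone φ) (hloc : IsLocal φ)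
    {B : Finset α} (hB : IsBasisOf φ B G) (hFG : F ⊆ G) (hF : ⊥ < φ F) (hFB : φ F = φ B)
    (ha : ¬ Violates φ F a) : ¬ Violates φ B a := by
  have hGa : ¬ Violates φ G a := mt (hloc F G hFG hF (hFB.trans hB.2.2.1) a) ha
  exact not_lt.mpr ((hmono (insert_subset_insert a hB.1)).trans
    ((not_lt.mp hGa).trans_eq hB.2.2.1.symm))

theorem IsBasisOf.of_subset {B H : Finset α} (hB : IsBasisOf φ B G) (hBH : B ⊆ H)
    (hφ : φ B = φ H) : IsBasisOf φ B H :=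
  ⟨hBH, hB.2.1, hφ, hB.2.2.2⟩

end AbstractProgram

section ConstraintsConsensus

variable {α Φ ι : Type*} [DecidableEq α] [LinearOrder Φ] [OrderBot Φ] [Fintype ι]

def consensusPool (h : ι → α) (Nin : ℕ → ι → ι → Bool) (B : ℕ → ι → Finset α) (t : ℕ) (i : ι) :
    Finset α :=
  insert (h i) (B t i ∪ (univ.filter fun j => Nin t i j = true).biUnion (B t))

def IsConstraintsConsensusRun (φ : Finset α → Φ) (h : ι → α) (Nin : ℕ → ι → ι → Bool)
    (B : ℕ → ι → Finset α) : Prop :=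
  ∀ t i, IsBasisOf φ (B (t + 1) i) (consensusPool h Nin B t i)

/-- `EdgeAfter Nin T a b`: `a` is an in-neighbour of `b` at some round `τ ≥ T`. -/
def EdgeAfter (Nin : ℕ → ι → ι → Bool) (T : ℕ) (a b : ι) : Prop :=
  ∃ τ, T ≤ τ ∧ Nin τ b a = true

variable {φ : Finset α → Φ} {h : ι → α} {Nin : ℕ → ι → ι → Bool} {B : ℕ → ι → Finset α}
  {t T : ℕ} {i j : ι}

theorem mem_consensusPool_self : h i ∈ consensusPool h Nin B t i :=
  mem_insert_self _ _

theorem subset_consensusPool_self : B t i ⊆ consensusPool h Nin B t i :=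
  subset_union_left.trans (subset_insert _ _)

theorem subset_consensusPool_of_in (hij : Nin t i j = true) : B t j ⊆ consensusPool h Nin B t i :=
  fun _ hx => mem_insert_of_mem (mem_union_right _
    (mem_biUnion.mpr ⟨j, mem_filter.mpr ⟨mem_univ j, hij⟩, hx⟩))

theorem candidate_subset_image (hinit : ∀ i, B 0 i = {h i})
    (hrun : IsConstraintsConsensusRun φ h Nin B) (t : ℕ) (i : ι) : B t i ⊆ univ.image h := by
  induction t generalizing i with
  | zero => simp [hinit i]
  | succ s ih =>
    exact (hrun s i).1.trans (insert_subset (mem_image_of_mem h (mem_univ i))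
      (union_subset (ih i) (biUnion_subset.mpr fun j _ => ih j)))

theorem bot_lt_phi_candidate (hrun : IsConstraintsConsensusRun φ h Nin B) (ht : 1 ≤ t) :
    ⊥ < φ (B t i) := by
  obtain ⟨s, rfl⟩ := Nat.exists_eq_add_of_le' ht
  exact (hrun s i).2.1

theorem phi_candidate_le_succ (hmono : Monotone φ) (hrun : IsConstraintsConsensusRun φ h Nin B) :
    φ (B t i) ≤ φ (B (t + 1) i) :=
  (hmono subset_consensusPool_self).trans_eq (hrun t i).2.2.1.symm

theorem phi_candidate_le_of_in (hmono : Monotone φ) (hrun : IsConstraintsConsensusRun φ h Nin B)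
    (hij : Nin t i j = true) : φ (B t j) ≤ φ (B (t + 1) i) :=
  (hmono (subset_consensusPool_of_in hij)).trans_eq (hrun t i).2.2.1.symm

theorem exists_phi_candidate_eventually_eq (hmono : Monotone φ) (hinit : ∀ i, B 0 i = {h i})
    (hrun : IsConstraintsConsensusRun φ h Nin B)
    (hconn : ∀ t i j, Relation.ReflTransGen (EdgeAfter Nin t) i j) :
    ∃ T ≥ 1, ∀ t ≥ T, ∀ i j, φ (B t i) = φ (B T j) := by
  have hfin : (Set.range fun t i => φ (B t i)).Finite := by
    refine (Set.Finite.pi' fun _ => ((univ.image h).powerset.image φ).finite_toSet).subset ?_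
    rintro _ ⟨t, rfl⟩ i
    exact mem_coe.mpr
      (mem_image_of_mem φ (mem_powerset.mpr (candidate_subset_image hinit hrun t i)))
  obtain ⟨T, hT1, hT⟩ := exists_forall_ge_eq_of_le_succ (T₀ := 1)
    (fun t _ i => phi_candidate_le_succ hmono hrun) hfin
  have hle : ∀ i j, φ (B T i) ≤ φ (B T j) := fun i j =>
    (hconn T i j).le_of_rel_imp_le (g := fun i => φ (B T i)) fun a b ⟨τ, hτ, hab⟩ =>
      calc φ (B T a) = φ (B τ a) := (congrFun (hT τ hτ) a).symm
        _ ≤ φ (B (τ + 1) b) := phi_candidate_le_of_in hmono hrun hab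
        _ = φ (B T b) := congrFun (hT (τ + 1) (by omega)) b
  exact ⟨T, hT1, fun t ht i j =>
    (congrFun (hT t ht) i).trans (le_antisymm (hle i j) (hle j i))⟩

theorem not_violates_candidate_self (hmono : Monotone φ)
    (hrun : IsConstraintsConsensusRun φ h Nin B) (ht : 1 ≤ t) : ¬ Violates φ (B t i) (h i) := by
  obtain ⟨s, rfl⟩ := Nat.exists_eq_add_of_le' ht
  exact (hrun s i).not_violates_of_mem hmono mem_consensusPool_self

theorem not_violates_candidate_succ (hmono : Monotone φ) (hloc : IsLocal φ)
    (hrun : IsConstraintsConsensusRun φ h Nin B) (hT1 : 1 ≤ T)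
    (hT : ∀ t ≥ T, ∀ i j, φ (B t i) = φ (B T j)) (ht : T ≤ t)
    (hji : B t j ⊆ consensusPool h Nin B t i) {a : α} (ha : ¬ Violates φ (B t j) a) :
    ¬ Violates φ (B (t + 1) i) a :=
  (hrun t i).not_violates_of_subset hmono hloc hji (bot_lt_phi_candidate hrun (hT1.trans ht))
    ((hT t ht j i).trans (hT (t + 1) (by omega) i i).symm) ha

theorem exists_forall_not_violates (hmono : Monotone φ) (hloc : IsLocal φ)
    (hinit : ∀ i, B 0 i = {h i}) (hrun : IsConstraintsConsensusRun φ h Nin B)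
    (hconn : ∀ t i j, Relation.ReflTransGen (EdgeAfter Nin t) i j) :
    ∃ T ≥ 1, ∀ t ≥ T, ∀ i k, ¬ Violates φ (B t i) (h k) := by
  obtain ⟨T₀, hT₀1, hT₀⟩ := exists_phi_candidate_eventually_eq hmono hinit hrun hconn
  let satisfied : ℕ → ι → Set ι := fun t i => {k | ¬ Violates φ (B t i) (h k)}
  obtain ⟨T, hT₀T, hT⟩ := exists_forall_ge_eq_of_le_succ (f := satisfied) (T₀ := T₀)
    (fun t ht i k hk => not_violates_candidate_succ hmono hloc hrun hT₀1 hT₀ ht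
      subset_consensusPool_self hk) (Set.toFinite _)
  have hspread : ∀ a b, EdgeAfter Nin T a b → satisfied T a ≤ satisfied T b :=
    fun a b ⟨τ, hτ, hab⟩ k hk => by
      rw [← congrFun (hT τ hτ) a] at hk
      rw [← congrFun (hT (τ + 1) (by omega)) b]
      exact not_violates_candidate_succ hmono hloc hrun hT₀1 hT₀ (hT₀T.trans hτ)
        (subset_consensusPool_of_in hab) hk
  refine ⟨T, hT₀1.trans hT₀T, fun t ht i k => ?_⟩
  have hk : k ∈ satisfied T i := (hconn T k i).le_of_rel_imp_le hspread
    (not_violates_candidate_self hmono hrun (hT₀1.trans hT₀T))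
  rwa [← congrFun (hT t ht) i] at hk

theorem eventually_isBasisOf_candidate (hmono : Monotone φ) (hloc : IsLocal φ)
    (hinit : ∀ i, B 0 i = {h i}) (hrun : IsConstraintsConsensusRun φ h Nin B)
    (hconn : ∀ t i j, Relation.ReflTransGen (EdgeAfter Nin t) i j) :
    ∃ T, ∀ t ≥ T, ∀ i, IsBasisOf φ (B t i) (univ.image h) := by
  obtain ⟨T, hT1, hT⟩ := exists_forall_not_violates hmono hloc hinit hrun hconn
  refine ⟨T, fun t ht i => ?_⟩
  obtain ⟨s, rfl⟩ := Nat.exists_eq_add_of_le' (hT1.trans ht)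
  have hsub := candidate_subset_image hinit hrun (s + 1) i
  have hval : φ (B (s + 1) i ∪ univ.image h) = φ (B (s + 1) i) :=
    phi_union_eq_of_not_violates hmono hloc (bot_lt_phi_candidate hrun (Nat.le_add_left 1 s))
      (by simpa only [mem_image, mem_univ, true_and, forall_exists_index,
        forall_apply_eq_imp_iff] using hT (s + 1) ht i)
  exact (hrun s i).of_subset hsub (by rw [← hval, union_eq_right.mpr hsub])

end ConstraintsConsensus

theorem constraints_consensus_correctness_general
    {α : Type*} [DecidableEq α] {Φ : Type*} [LinearOrder Φ] [OrderBot Φ]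
    (φ : Finset α → Φ)
    (hmono : ∀ F G : Finset α, F ⊆ G → φ F ≤ φ G)
    (hloc : ∀ F G : Finset α, F ⊆ G → ⊥ < φ F → φ F = φ G →
      ∀ h : α, φ G < φ (insert h G) → φ F < φ (insert h F))
    (n : ℕ) (h : Fin n → α)
    (H : Finset α) (hH : H = Finset.univ.image h)
    (Nin : ℕ → Fin n → Fin n → Bool)
    (hconn : ∀ (t : ℕ) (i j : Fin n),
      Relation.ReflTransGen (fun a b => ∃ τ, t ≤ τ ∧ Nin τ b a = true) i j)
    (B : ℕ → Fin n → Finset α)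
    (hinit : ∀ i, B 0 i = {h i})
    (hupd : ∀ (t : ℕ) (i : Fin n),
      IsBasisOf φ (B (t+1) i)
        (insert (h i) (B t i ∪
          (Finset.univ.filter (fun j => Nin t i j = true)).biUnion (B t)))) :
    ∃ T, (∀ t, T ≤ t → ∀ i, IsBasisOf φ (B t i) H) ∧
      (∀ BH : Finset α, IsBasisOf φ BH H →
        (∀ B' : Finset α, IsBasisOf φ B' H → B' = BH) →
        ∀ t, T ≤ t → ∀ i, B t i = BH) := by
  subst hH
  obtain ⟨T, hT⟩ :=
    eventually_isBasisOf_candidate (fun F G => hmono F G) hloc hinit hupd hconn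
  exact ⟨T, hT, fun BH _ huniq t ht i => huniq _ (hT t ht i)⟩

/-- Correctness of the constraints consensus algorithm: on a jointly strongly
connected time-dependent digraph, in finite time every node's candidate basis
is a solution of `(H, φ)` (a basis of `H`); moreover if `(H, φ)` has a unique
basis `B_H`, every node's final candidate basis equals `B_H`. -/
theorem constraints_consensus_correctness
    {α : Type*} [DecidableEq α] {Φ : Type*} [LinearOrder Φ] [OrderBot Φ]
    (φ : Finset α → Φ)
    (hmono : ∀ F G : Finset α, F ⊆ G → φ F ≤ φ G)
    (hloc : ∀ F G : Finset α, F ⊆ G → ⊥ < φ F → φ F = φ G →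
      ∀ h : α, φ G < φ (insert h G) → φ F < φ (insert h F))
    (n : ℕ) (hn : 0 < n) (h : Fin n → α)
    (H : Finset α) (hH : H = Finset.univ.image h)
    (Nin : ℕ → Fin n → Fin n → Bool)
    (hconn : ∀ (t : ℕ) (i j : Fin n),
      Relation.ReflTransGen (fun a b => ∃ τ, t ≤ τ ∧ Nin τ b a = true) i j)
    (B : ℕ → Fin n → Finset α)
    (hinit : ∀ i, B 0 i = {h i}) (hfin0 : ∃ i, ⊥ < φ (B 0 i))
    (hupd : ∀ (t : ℕ) (i : Fin n),
      IsBasisOf φ (B (t+1) i)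
        (insert (h i) (B t i ∪
          (Finset.univ.filter (fun j => Nin t i j = true)).biUnion (B t)))) :
    ∃ T, (∀ t, T ≤ t → ∀ i, IsBasisOf φ (B t i) H) ∧
      (∀ BH : Finset α, IsBasisOf φ BH H →
        (∀ B' : Finset α, IsBasisOf φ B' H → B' = BH) →
        ∀ t, T ≤ t → ∀ i, B t i = BH) :=
  constraints_consensus_correctness_general φ hmono hloc n h H hH Nin hconn B hinit hupd
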